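/- arXiv:2402.09202 — 3 statements merged into one kernel-verified Lean document; each statement's English description precedes it below -/
import Mathlib

section
/- If (u_n) is a sequence of positive real numbers such that n(1 - u_{n-1}/u_n) → α as n → ∞, then for every τ > α the sequence (n^{-τ} u_n) is eventually (strictly) decreasing, and for every σ < α the sequence (n^{-σ} u_n) is eventually (strictly) increasing. -/
/-!
The power sequence `n ^ c` satisfies the hypothesis with `α = c`:
`(n + 1) (1 - (n / (n + 1)) ^ c) → c`. Comparing limits, for `σ < α < τ` the ratio
`u n / u (n + 1)` eventually lies strictly between `(n / (n + 1)) ^ τ` and `(n / (n + 1)) ^ σ`,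
and these two inequalities say exactly that `n ^ (-τ) u n` decreases and `n ^ (-σ) u n` increases.
-/

open Filter Topology

lemma tendsto_succ_mul_one_sub_div_succ_rpow (c : ℝ) :
    Tendsto (fun n : ℕ => ((n : ℝ) + 1) * (1 - ((n : ℝ) / (n + 1)) ^ c)) atTop (𝓝 c) := by
  -- `(n + 1) (1 - y ^ c)` is the slope of `x ↦ x ^ c` between `1` and `y = n / (n + 1)`.
  have hslope : Tendsto (slope (fun x : ℝ => x ^ c) 1) (𝓝[≠] 1) (𝓝 c) := by
    simpa using (Real.hasDerivAt_rpow_const (x := 1) (p := c) (Or.inl one_ne_zero)).tendsto_slope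
  have hseq : Tendsto (fun n : ℕ => (n : ℝ) / (n + 1)) atTop (𝓝[≠] 1) :=
    tendsto_nhdsWithin_of_tendsto_nhds_of_eventually_within _ (tendsto_natCast_div_add_atTop 1)
      (Eventually.of_forall fun n => ((div_lt_one (by positivity)).mpr (lt_add_one (n : ℝ))).ne)
  refine (hslope.comp hseq).congr fun n => ?_
  have hn : (n : ℝ) + 1 ≠ 0 := by positivity
  simp only [Function.comp_apply, slope_def_field, Real.one_rpow]
  field_simp
  ring

lemma tendsto_succ_mul_one_sub_div_succ {u : ℕ → ℝ} {α : ℝ}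
    (h : Tendsto (fun n : ℕ => (n : ℝ) * (1 - u (n - 1) / u n)) atTop (𝓝 α)) :
    Tendsto (fun n : ℕ => ((n : ℝ) + 1) * (1 - u n / u (n + 1))) atTop (𝓝 α) := by
  simpa using (tendsto_add_atTop_iff_nat 1).mpr h

lemma Filter.Tendsto.eventually_lt_of_mul_one_sub {ι : Type*} {l : Filter ι} {f p q : ι → ℝ}
    {a b : ℝ} (hf : ∀ i, 0 < f i) (hp : Tendsto (fun i => f i * (1 - p i)) l (𝓝 a))
    (hq : Tendsto (fun i => f i * (1 - q i)) l (𝓝 b)) (hab : a < b) :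
    ∀ᶠ i in l, q i < p i := by
  filter_upwards [hp.eventually_lt hq hab] with i hi
  linarith [lt_of_mul_lt_mul_left hi (hf i).le]

lemma rpow_neg_mul_eq_div_mul {a b x y : ℝ} (ha : 0 < a) (hb : 0 < b) (hy : 0 < y) (c : ℝ) :
    a ^ (-c) * x = x / y / (a / b) ^ c * (b ^ (-c) * y) := by
  rw [Real.div_rpow ha.le hb.le, Real.rpow_neg ha.le, Real.rpow_neg hb.le]
  have := Real.rpow_pos_of_pos ha c
  have := Real.rpow_pos_of_pos hb c
  field_simp

lemma rpow_neg_mul_lt_rpow_neg_mul_iff {a b x y : ℝ} (ha : 0 < a) (hb : 0 < b) (hy : 0 < y)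
    (c : ℝ) : b ^ (-c) * y < a ^ (-c) * x ↔ (a / b) ^ c < x / y := by
  have hP : 0 < b ^ (-c) * y := mul_pos (Real.rpow_pos_of_pos hb _) hy
  rw [rpow_neg_mul_eq_div_mul ha hb hy, lt_mul_iff_one_lt_left hP,
    one_lt_div (Real.rpow_pos_of_pos (div_pos ha hb) c)]

lemma rpow_neg_mul_lt_rpow_neg_mul_iff' {a b x y : ℝ} (ha : 0 < a) (hb : 0 < b) (hy : 0 < y)
    (c : ℝ) : a ^ (-c) * x < b ^ (-c) * y ↔ x / y < (a / b) ^ c := by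
  have hP : 0 < b ^ (-c) * y := mul_pos (Real.rpow_pos_of_pos hb _) hy
  rw [rpow_neg_mul_eq_div_mul ha hb hy, mul_lt_iff_lt_one_left hP,
    div_lt_one (Real.rpow_pos_of_pos (div_pos ha hb) c)]

/-- If n(1 - u_{n-1}/u_n) → α, then (n^{-τ} u_n) is eventually strictly decreasing for τ > α
and (n^{-σ} u_n) is eventually strictly increasing for σ < α. -/
theorem stmt_1 (u : ℕ → ℝ) (hu : ∀ n, 0 < u n) (α : ℝ)
    (h : Tendsto (fun n : ℕ => (n : ℝ) * (1 - u (n - 1) / u n)) atTop (nhds α)) :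
    (∀ τ : ℝ, α < τ → ∀ᶠ n : ℕ in atTop,
      ((n + 1 : ℕ) : ℝ) ^ (-τ) * u (n + 1) < (n : ℝ) ^ (-τ) * u n) ∧
    (∀ σ : ℝ, σ < α → ∀ᶠ n : ℕ in atTop,
      (n : ℝ) ^ (-σ) * u n < ((n + 1 : ℕ) : ℝ) ^ (-σ) * u (n + 1)) := by
  have hratio := tendsto_succ_mul_one_sub_div_succ h
  have hpos : ∀ n : ℕ, (0 : ℝ) < n + 1 := fun n => by positivity
  refine ⟨fun τ hτ => ?_, fun σ hσ => ?_⟩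
  · filter_upwards [hratio.eventually_lt_of_mul_one_sub hpos
      (tendsto_succ_mul_one_sub_div_succ_rpow τ) hτ, eventually_gt_atTop 0] with n hn hn0
    rw [Nat.cast_succ]
    exact (rpow_neg_mul_lt_rpow_neg_mul_iff (Nat.cast_pos.mpr hn0) (hpos n) (hu _) _).mpr hn
  · filter_upwards [(tendsto_succ_mul_one_sub_div_succ_rpow σ).eventually_lt_of_mul_one_sub hpos
      hratio hσ, eventually_gt_atTop 0] with n hn hn0
    rw [Nat.cast_succ]
    exact (rpow_neg_mul_lt_rpow_neg_mul_iff' (Nat.cast_pos.mpr hn0) (hpos n) (hu _) _).mpr hn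
end

section
/- Let (u_n) be a sequence of positive reals satisfying u_{n+1}/u_n = 1 + α/n + o(1/n) for some α > -1. Then (1/(n u_n)) ∑_{k=1}^n u_k → 1/(1+α) as n → ∞. -/
/-!
Put `b n = n * u n`. Then `(b (n + 1) - b n) / u n = n * (u (n + 1) / u n - 1) + u (n + 1) / u n`
tends to `1 + α > 0`, so eventually `b (n + 1) - b n ≥ c * b n / n` with `c > 0`: `b` increases
and its increments dominate a multiple of the harmonic series, so `b → ∞`. The Stolz–Cesàro
theorem applied to `(∑ k ∈ Icc 1 n, u k) / b n` then reduces the claim to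
`u (n + 1) / (b (n + 1) - b n) = (u (n + 1) / u n) / ((b (n + 1) - b n) / u n) → 1 / (1 + α)`.
-/

open Filter Finset Asymptotics Topology

lemma tendsto_sum_Ico_one_div_atTop (N : ℕ) :
    Tendsto (fun n : ℕ => ∑ k ∈ Ico N n, (1 : ℝ) / k) atTop atTop := by
  have hrange : Tendsto (fun n : ℕ => ∑ k ∈ range n, (1 : ℝ) / k) atTop atTop :=
    (not_summable_iff_tendsto_nat_atTop_of_nonneg fun n => by positivity).1
      Real.not_summable_one_div_natCast
  refine (tendsto_atTop_add_const_right _ (-∑ k ∈ range N, (1 : ℝ) / k) hrange).congr' ?_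
  filter_upwards [eventually_ge_atTop N] with n hn
  rw [sum_Ico_eq_sub _ hn, sub_eq_add_neg]

lemma tendsto_atTop_of_mul_le_natCast_mul_sub {b : ℕ → ℝ} {c : ℝ} (hc : 0 < c) {N : ℕ}
    (hbN : 0 < b N) (h : ∀ n ≥ N, c * b n ≤ n * (b (n + 1) - b n)) :
    Tendsto b atTop atTop := by
  have hmono : ∀ n ≥ N, b N ≤ b n ∧ 0 < n * (b (n + 1) - b n) := by
    refine Nat.le_induction ⟨le_rfl, (mul_pos hc hbN).trans_le (h N le_rfl)⟩ ?_
    intro n hn ⟨hle, hpos⟩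
    have hle' : b N ≤ b (n + 1) := hle.trans (by nlinarith [Nat.cast_nonneg (α := ℝ) n])
    exact ⟨hle', (mul_pos hc (hbN.trans_le hle')).trans_le (h (n + 1) (by omega))⟩
  have hincr : ∀ k ≥ N, c * b N / k ≤ b (k + 1) - b k := by
    intro k hk
    obtain ⟨hle, hpos⟩ := hmono k hk
    have hk0 : (0 : ℝ) < k := by
      rcases Nat.eq_zero_or_pos k with rfl | hk0
      · simp at hpos
      · exact_mod_cast hk0
    refine div_le_of_le_mul₀ hk0.le (pos_of_mul_pos_right hpos hk0.le).le ?_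
    calc c * b N ≤ c * b k := by gcongr
      _ ≤ (b (k + 1) - b k) * k := by linarith [h k hk]
  have hlower : ∀ n ≥ N, b N + c * b N * ∑ k ∈ Ico N n, (1 : ℝ) / k ≤ b n := by
    intro n hn
    calc b N + c * b N * ∑ k ∈ Ico N n, (1 : ℝ) / k
        = b N + ∑ k ∈ Ico N n, c * b N / k := by simp only [mul_sum, mul_one_div]
      _ ≤ b N + ∑ k ∈ Ico N n, (b (k + 1) - b k) :=
          add_le_add_right (sum_le_sum fun k hk => hincr k (mem_Ico.1 hk).1) _
      _ = b n := by rw [sum_Ico_sub b hn]; ring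
  exact tendsto_atTop_mono' _ (eventually_atTop.2 ⟨N, hlower⟩)
    (tendsto_atTop_add_const_left _ _
      ((tendsto_sum_Ico_one_div_atTop N).const_mul_atTop (mul_pos hc hbN)))

theorem tendsto_div_of_strictMono_of_tendsto_sub_div_sub {a b : ℕ → ℝ} {L : ℝ}
    (hb : StrictMono b) (hbtop : Tendsto b atTop atTop)
    (h : Tendsto (fun n => (a (n + 1) - a n) / (b (n + 1) - b n)) atTop (𝓝 L)) :
    Tendsto (fun n => a n / b n) atTop (𝓝 L) := by
  have hgap : ∀ n, 0 < b (n + 1) - b n := fun n => sub_pos.2 (hb n.lt_succ_self)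
  have hlo : (fun n => (a (n + 1) - a n) - L * (b (n + 1) - b n)) =o[atTop]
      fun n => b (n + 1) - b n := by
    rw [isLittleO_iff_tendsto fun n hn => absurd hn (hgap n).ne']
    refine (tendsto_sub_nhds_zero_iff.2 h).congr fun n => ?_
    rw [eq_comm, sub_div _ (L * _), mul_div_cancel_right₀ _ (hgap n).ne']
  have hsum : (fun n => (a n - a 0) - L * (b n - b 0)) =o[atTop] fun n => b n - b 0 := by
    refine (hlo.sum_range (fun n => (hgap n).le) ?_).congr (fun n => ?_) fun n => ?_
    · exact (tendsto_atTop_add_const_right _ (-b 0) hbtop).congr fun n => by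
        rw [sum_range_sub, sub_eq_add_neg]
    · rw [sum_sub_distrib, ← mul_sum, sum_range_sub, sum_range_sub]
    · rw [sum_range_sub]
  have hconst : ∀ C : ℝ, (fun _ : ℕ => C) =o[atTop] b := fun C =>
    isLittleO_const_left.2 (Or.inr (tendsto_norm_atTop_atTop.comp hbtop))
  have hmain : (fun n => a n - L * b n) =o[atTop] b := by
    refine ((hsum.trans_isBigO ((isBigO_refl b _).sub (hconst _).isBigO)).add
      (hconst (a 0 - L * b 0))).congr_left fun n => ?_
    ring
  refine tendsto_sub_nhds_zero_iff.1 (hmain.tendsto_div_nhds_zero.congr' ?_)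
  filter_upwards [hbtop.eventually_ne_atTop 0] with n hn
  rw [sub_div, mul_div_cancel_right₀ _ hn]

/-- **Stolz–Cesàro theorem** -/
theorem tendsto_div_of_tendsto_sub_div_sub {a b : ℕ → ℝ} {L : ℝ}
    (hb : ∀ᶠ n in atTop, b n < b (n + 1)) (hbtop : Tendsto b atTop atTop)
    (h : Tendsto (fun n => (a (n + 1) - a n) / (b (n + 1) - b n)) atTop (𝓝 L)) :
    Tendsto (fun n => a n / b n) atTop (𝓝 L) := by
  obtain ⟨N, hN⟩ := eventually_atTop.1 hb
  rw [← tendsto_add_atTop_iff_nat N] at hbtop h ⊢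
  have hmono : StrictMono fun n => b (n + N) := strictMono_nat_of_lt_succ fun n => by
    simpa only [add_right_comm] using hN (n + N) (by omega)
  exact tendsto_div_of_strictMono_of_tendsto_sub_div_sub hmono hbtop
    (by simpa only [add_right_comm] using h)

lemma tendsto_one_of_tendsto_natCast_mul_sub_one {x : ℕ → ℝ} {α : ℝ}
    (h : Tendsto (fun n : ℕ => (n : ℝ) * (x n - 1)) atTop (𝓝 α)) :
    Tendsto x atTop (𝓝 1) := by
  have hlim := tendsto_const_nhds (x := (1 : ℝ)).add (h.mul tendsto_one_div_atTop_nhds_zero_nat)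
  rw [mul_zero, add_zero] at hlim
  refine hlim.congr' ?_
  filter_upwards [eventually_ne_atTop 0] with n hn
  field_simp
  ring

/-- Cesàro characterization for regularly varying sequences of index α > -1. -/
theorem stmt_2 (u : ℕ → ℝ) (hu : ∀ n, 0 < u n) (α : ℝ) (hα : -1 < α)
    (h : Tendsto (fun n : ℕ => (n : ℝ) * (u (n + 1) / u n - 1)) atTop (nhds α)) :
    Tendsto (fun n : ℕ => (∑ k ∈ Finset.Icc 1 n, u k) / ((n : ℝ) * u n)) atTop
      (nhds (1 / (1 + α))) := by
  have hratio := tendsto_one_of_tendsto_natCast_mul_sub_one h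
  have hgap : Tendsto (fun n : ℕ => (((n + 1 : ℕ) : ℝ) * u (n + 1) - n * u n) / u n) atTop
      (𝓝 (1 + α)) := by
    refine (add_comm α 1 ▸ h.add hratio).congr fun n => ?_
    field_simp [(hu n).ne']
    push_cast
    ring
  obtain ⟨N, hN⟩ := eventually_atTop.1
    (hgap.eventually (eventually_gt_nhds (half_lt_self (by linarith : 0 < 1 + α))))
  have hstep : ∀ n ≥ N, (1 + α) / 2 * u n < ((n + 1 : ℕ) : ℝ) * u (n + 1) - n * u n :=
    fun n hn => (lt_div_iff₀ (hu n)).1 (hN n hn)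
  apply tendsto_div_of_tendsto_sub_div_sub (eventually_atTop.2 ⟨N, fun n hn => by
    linarith [hstep n hn, mul_pos (by linarith : 0 < (1 + α) / 2) (hu n)]⟩)
  · refine tendsto_atTop_of_mul_le_natCast_mul_sub (c := (1 + α) / 2) (by linarith)
      (N := N + 1) (mul_pos (by positivity) (hu _)) fun n hn => ?_
    rw [mul_left_comm]
    exact mul_le_mul_of_nonneg_left (hstep n (by omega)).le n.cast_nonneg
  · refine (hratio.div hgap (by linarith)).congr fun n => ?_
    rw [sum_Icc_succ_top (by omega), add_sub_cancel_left, Pi.div_apply,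
      div_div_div_cancel_right₀ (hu n).ne']
end

section
/- Let (X_n) be adapted and square-integrable with E(X_{n+1}|ℱ_n) = (p/ν_n)Y_n and sup_n E(X_n²) < ∞, and suppose the martingale decomposition S_n = N_n + p η_n M_n holds with ∑_n n^{-2} E((ΔN_{n+1})² | ℱ_n) < ∞ a.s. and ∑_n (η_n/n)² E((ΔM_{n+1})² | ℱ_n) < ∞ a.s., with (n/η_n) eventually increasing to infinity. Then N_n/n → 0 and η_n M_n / n → 0 almost surely, hence S_n/n → 0 almost surely. -/
/-!
A square-integrable martingale converges a.s. on the event where its predictable quadratic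
variation `⟨M⟩_∞ = ∑ E[(ΔM_k)² | ℱ_k]` is finite: stopped before `⟨M⟩` exceeds `K` it is bounded
in `L²` (its increments are orthogonal), hence converges, and on `{⟨M⟩_∞ ≤ K}` it is never
stopped. The hypotheses say exactly that the transforms `∑ ΔN_k / k` and `∑ (η_k / k) ΔM_k` have
finite predictable quadratic variation, so they converge a.s., and Kronecker's lemma turns this
into `N_n / n → 0` and `η_n M_n / n → 0`; the decomposition of `S` gives the rest.
-/

open MeasureTheory Filter Finset Topology Asymptotics

lemma sum_range_mul_sub_eq (b r : ℕ → ℝ) (n : ℕ) :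
    ∑ k ∈ range n, b k * (r (k + 1) - r k)
      = b n * r n - b 0 * r 0 - ∑ k ∈ range n, (b (k + 1) - b k) * r (k + 1) := by
  induction n with
  | zero => simp
  | succ n ih => rw [sum_range_succ, sum_range_succ, ih]; ring

lemma tendsto_sum_range_sub_mul_div_of_tendsto_zero {b r : ℕ → ℝ}
    (hb_mono : ∀ᶠ n in atTop, b n ≤ b (n + 1)) (hb : Tendsto b atTop atTop)
    (hr : Tendsto r atTop (𝓝 0)) :
    Tendsto (fun n => (∑ k ∈ range n, (b (k + 1) - b k) * r (k + 1)) / b n) atTop (𝓝 0) := by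
  set g : ℕ → ℝ := fun k => ‖b (k + 1) - b k‖ with hg
  have hfg : (fun k => (b (k + 1) - b k) * r (k + 1)) =o[atTop] g := by
    have hr' : (fun k => r (k + 1)) =o[atTop] (fun _ => (1 : ℝ)) :=
      (isLittleO_one_iff ℝ).2 (hr.comp (tendsto_add_atTop_nat 1))
    simpa only [mul_one] using
      ((isBigO_refl (fun k => b (k + 1) - b k) atTop).mul_isLittleO hr').norm_right
  have hg_top : Tendsto (fun n => ∑ k ∈ range n, g k) atTop atTop := by
    refine tendsto_atTop_mono (fun n => ?_) (tendsto_atTop_add_const_right _ (-b 0) hb)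
    calc b n + -b 0 = ∑ k ∈ range n, (b (k + 1) - b k) := by rw [sum_range_sub]; ring
      _ ≤ ∑ k ∈ range n, g k := sum_le_sum fun k _ => Real.le_norm_self _
  obtain ⟨N, hN⟩ := eventually_atTop.1 hb_mono
  have hg_eq : ∀ n ≥ N, ∑ k ∈ range n, g k
      = b n + (∑ k ∈ range N, (g k - (b (k + 1) - b k)) - b 0) := by
    intro n hn
    have hconst := eventually_constant_sum (u := fun k => g k - (b (k + 1) - b k))
      (fun k hk => by simp [hg, abs_of_nonneg (sub_nonneg.2 (hN k hk))]) hn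
    rw [← hconst, sum_sub_distrib, sum_range_sub]; ring
  have hgb : (fun n => ∑ k ∈ range n, g k) =O[atTop] b := by
    have hconst : (fun _ : ℕ => ∑ k ∈ range N, (g k - (b (k + 1) - b k)) - b 0) =o[atTop] b :=
      isLittleO_const_left.2 (Or.inr (tendsto_norm_atTop_atTop.comp hb))
    exact ((isBigO_refl b atTop).add hconst.isBigO).congr'
      (eventually_atTop.2 ⟨N, fun n hn => (hg_eq n hn).symm⟩) EventuallyEq.rfl
  exact ((hfg.sum_range (fun k => norm_nonneg _) hg_top).trans_isBigO hgb).tendsto_div_nhds_zero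

theorem Filter.Tendsto.kronecker {b u : ℕ → ℝ} {L : ℝ}
    (hconv : Tendsto (fun n => ∑ k ∈ range n, (b k)⁻¹ * u k) atTop (𝓝 L))
    (hb_mono : ∀ᶠ n in atTop, b n ≤ b (n + 1)) (hb : Tendsto b atTop atTop) :
    Tendsto (fun n => (∑ k ∈ range n, u k) / b n) atTop (𝓝 0) := by
  set r : ℕ → ℝ := fun n => ∑ k ∈ range n, (b k)⁻¹ * u k - L with hr
  have hr_lim : Tendsto r atTop (𝓝 0) := by simpa using hconv.sub_const L
  obtain ⟨N, hN⟩ := eventually_atTop.1 (hb.eventually_ne_atTop 0)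
  set C := ∑ k ∈ range N, (u k - b k * (r (k + 1) - r k)) - b 0 * r 0
  -- Abel summation against the tails `r` of the convergent series
  have hsum : ∀ n ≥ N, ∑ k ∈ range n, u k
      = b n * r n + C - ∑ k ∈ range n, (b (k + 1) - b k) * r (k + 1) := by
    intro n hn
    have hconst := eventually_constant_sum (u := fun k => u k - b k * (r (k + 1) - r k))
      (fun k hk => by simp [hr, sum_range_succ, mul_inv_cancel_left₀ (hN k hk)]) hn
    rw [sum_sub_distrib] at hconst
    linarith [sum_range_mul_sub_eq b r n]
  have hlim := (hr_lim.add (tendsto_const_nhds (x := C).div_atTop hb)).sub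
    (tendsto_sum_range_sub_mul_div_of_tendsto_zero hb_mono hb hr_lim)
  simp only [add_zero, sub_zero] at hlim
  refine hlim.congr' (eventually_atTop.2 ⟨N, fun n hn => ?_⟩)
  dsimp only
  rw [hsum n hn]
  field_simp [hN n hn]

theorem Filter.Tendsto.kronecker_sub {b x : ℕ → ℝ} {L : ℝ}
    (hconv : Tendsto (fun n => ∑ k ∈ range n, (b k)⁻¹ * (x (k + 1) - x k)) atTop (𝓝 L))
    (hb_mono : ∀ᶠ n in atTop, b n ≤ b (n + 1)) (hb : Tendsto b atTop atTop) :
    Tendsto (fun n => x n / b n) atTop (𝓝 0) := by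
  have hlim := (hconv.kronecker hb_mono hb).add (tendsto_const_nhds (x := x 0).div_atTop hb)
  simp only [sum_range_sub, add_zero] at hlim
  refine hlim.congr fun n => ?_
  ring

lemma sum_range_ite_sum_le {a : ℕ → ℝ} {K : ℝ} (ha : ∀ k, 0 ≤ a k) (hK : 0 ≤ K) (n : ℕ) :
    ∑ k ∈ range n, (if ∑ j ∈ range (k + 1), a j ≤ K then a k else 0) ≤ K := by
  induction n with
  | zero => simpa using hK
  | succ n ih =>
    rw [sum_range_succ]
    split_ifs with h
    · calc _ ≤ ∑ k ∈ range n, a k + a n := by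
            gcongr with k
            split_ifs <;> simp [ha k]
        _ ≤ K := by rwa [← sum_range_succ]
    · simpa using ih

namespace MeasureTheory

variable {Ω : Type*} {m0 : MeasurableSpace Ω} {P : Measure Ω}

lemma eLpNorm_one_le_of_integral_sq_le [IsFiniteMeasure P] {f : Ω → ℝ} (hf : MemLp f 2 P) {B : ℝ}
    (hB : ∫ ω, f ω ^ 2 ∂P ≤ B) : eLpNorm f 1 P ≤ ENNReal.ofReal ((B + P.real Set.univ) / 2) := by
  have hf_int : Integrable f P := hf.integrable one_le_two
  rw [eLpNorm_one_eq_lintegral_enorm, ← ofReal_integral_norm_eq_lintegral_enorm hf_int]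
  refine ENNReal.ofReal_le_ofReal ?_
  calc ∫ ω, ‖f ω‖ ∂P ≤ ∫ ω, (f ω ^ 2 + 1) / 2 ∂P := by
        refine integral_mono hf_int.norm ((hf.integrable_sq.add (integrable_const 1)).div_const 2)
          fun ω => ?_
        nlinarith [sq_nonneg (|f ω| - 1), sq_abs (f ω), Real.norm_eq_abs (f ω)]
    _ = (∫ ω, f ω ^ 2 ∂P + P.real Set.univ) / 2 := by
        rw [integral_div, integral_add hf.integrable_sq (integrable_const 1)]
        simp
    _ ≤ (B + P.real Set.univ) / 2 := by linarith

lemma integral_mul_eq_zero_of_condExp_ae_eq_zero {m : MeasurableSpace Ω} (hm : m ≤ m0)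
    [SigmaFinite (P.trim hm)] {g D : Ω → ℝ} (hg : StronglyMeasurable[m] g)
    (hgD : Integrable (g * D) P) (hD : Integrable D P) (hD0 : P[D | m] =ᵐ[P] 0) :
    ∫ ω, g ω * D ω ∂P = 0 := by
  have hpull : P[g * D | m] =ᵐ[P] 0 := by
    filter_upwards [condExp_mul_of_stronglyMeasurable_left hg hgD hD, hD0] with ω h h0
    simp [h, h0]
  calc ∫ ω, g ω * D ω ∂P = ∫ ω, (P[g * D | m]) ω ∂P := (integral_condExp hm).symm
    _ = 0 := by simp [integral_congr_ae hpull]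

variable {ℱ : Filtration ℕ m0}

noncomputable def predictableQuadVar (M : ℕ → Ω → ℝ) (ℱ : Filtration ℕ m0) (P : Measure Ω)
    (n : ℕ) : Ω → ℝ :=
  ∑ k ∈ range n, P[fun ω => (M (k + 1) ω - M k ω) ^ 2 | ℱ k]

lemma Martingale.condExp_sub_succ_ae_eq_zero [SigmaFiniteFiltration P ℱ] {M : ℕ → Ω → ℝ}
    (hM : Martingale M ℱ P) (n : ℕ) :
    P[M (n + 1) - M n | ℱ n] =ᵐ[P] 0 := by
  filter_upwards [condExp_sub (hM.integrable (n + 1)) (hM.integrable n) (ℱ n),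
    hM.condExp_ae_eq n.le_succ] with ω h_sub h_succ
  rw [h_sub, Pi.sub_apply, h_succ, condExp_of_stronglyMeasurable (ℱ.le n) (hM.stronglyAdapted n)
    (hM.integrable n), Pi.zero_apply, sub_self]

section MartingaleDifferences

variable {D : ℕ → Ω → ℝ}

lemma stronglyMeasurable_sum_range_of_succ (hmeas : ∀ n, StronglyMeasurable[ℱ (n + 1)] (D n))
    (n : ℕ) :
    StronglyMeasurable[ℱ n] (∑ k ∈ range n, D k) :=
  Finset.stronglyMeasurable_sum _ fun k hk => (hmeas k).mono (ℱ.mono (mem_range.1 hk))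

lemma martingale_sum_range_of_condExp_ae_eq_zero [IsFiniteMeasure P]
    (hmeas : ∀ n, StronglyMeasurable[ℱ (n + 1)] (D n)) (hint : ∀ n, Integrable (D n) P)
    (hD : ∀ n, P[D n | ℱ n] =ᵐ[P] 0) :
    Martingale (fun n => ∑ k ∈ range n, D k) ℱ P :=
  martingale_of_condExp_sub_eq_zero_nat (stronglyMeasurable_sum_range_of_succ hmeas)
    (fun n => integrable_finsetSum' _ fun k _ => hint k) fun n => by
      simpa [sum_range_succ_sub_sum] using hD n

lemma integral_sq_sum_range_of_condExp_ae_eq_zero [IsFiniteMeasure P]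
    (hmeas : ∀ n, StronglyMeasurable[ℱ (n + 1)] (D n)) (hL2 : ∀ n, MemLp (D n) 2 P)
    (hD : ∀ n, P[D n | ℱ n] =ᵐ[P] 0) (n : ℕ) :
    ∫ ω, (∑ k ∈ range n, D k ω) ^ 2 ∂P = ∑ k ∈ range n, ∫ ω, D k ω ^ 2 ∂P := by
  induction n with
  | zero => simp
  | succ n ih =>
    have hW : MemLp (∑ k ∈ range n, D k) 2 P := memLp_finsetSum' _ fun k _ => hL2 k
    have hcross : ∫ ω, (∑ k ∈ range n, D k) ω * D n ω ∂P = 0 :=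
      integral_mul_eq_zero_of_condExp_ae_eq_zero (ℱ.le n)
        (stronglyMeasurable_sum_range_of_succ hmeas n) (hW.integrable_mul (hL2 n))
        ((hL2 n).integrable one_le_two) (hD n)
    have hWD : Integrable (fun ω => (∑ k ∈ range n, D k ω) * D n ω) P := by
      refine (hW.integrable_mul (hL2 n)).congr (ae_of_all _ fun ω => ?_)
      simp
    have hW2 : Integrable (fun ω => (∑ k ∈ range n, D k ω) ^ 2) P := by
      simpa only [Finset.sum_apply] using hW.integrable_sq
    have hexpand : ∀ ω, (∑ k ∈ range (n + 1), D k ω) ^ 2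
        = ((∑ k ∈ range n, D k ω) ^ 2 + D n ω ^ 2) + 2 * ((∑ k ∈ range n, D k ω) * D n ω) := by
      intro ω; rw [sum_range_succ]; ring
    simp only [Finset.sum_apply] at hcross
    simp_rw [hexpand]
    have hsq : Integrable (fun ω => (∑ k ∈ range n, D k ω) ^ 2 + D n ω ^ 2) P :=
      hW2.add (hL2 n).integrable_sq
    rw [integral_add hsq (hWD.const_mul 2), integral_add hW2 (hL2 n).integrable_sq,
      integral_const_mul, hcross, ih, sum_range_succ]
    ring

lemma ae_exists_tendsto_sum_range_of_condExp_ae_eq_zero [IsFiniteMeasure P]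
    (hmeas : ∀ n, StronglyMeasurable[ℱ (n + 1)] (D n)) (hL2 : ∀ n, MemLp (D n) 2 P)
    (hD : ∀ n, P[D n | ℱ n] =ᵐ[P] 0) {B : ℝ} (hB : ∀ n, ∑ k ∈ range n, ∫ ω, D k ω ^ 2 ∂P ≤ B) :
    ∀ᵐ ω ∂P, ∃ L, Tendsto (fun n => ∑ k ∈ range n, D k ω) atTop (𝓝 L) := by
  have hmart := martingale_sum_range_of_condExp_ae_eq_zero hmeas
    (fun k => (hL2 k).integrable one_le_two) hD
  have hL1 : ∀ n, eLpNorm (∑ k ∈ range n, D k) 1 P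
      ≤ ((B + P.real Set.univ) / 2).toNNReal := fun n =>
    eLpNorm_one_le_of_integral_sq_le (memLp_finsetSum' _ fun k _ => hL2 k) <| by
      simpa only [Finset.sum_apply, integral_sq_sum_range_of_condExp_ae_eq_zero hmeas hL2 hD]
        using hB n
  simpa only [Finset.sum_apply] using hmart.submartingale.exists_ae_tendsto_of_bdd hL1

end MartingaleDifferences

variable {M : ℕ → Ω → ℝ}

lemma stronglyMeasurable_predictableQuadVar_succ (n : ℕ) :
    StronglyMeasurable[ℱ n] (predictableQuadVar M ℱ P (n + 1)) :=
  Finset.stronglyMeasurable_sum _ fun _ hk =>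
    stronglyMeasurable_condExp.mono (ℱ.mono (Nat.lt_succ_iff.1 (mem_range.1 hk)))

lemma condExp_sq_sub_nonneg (n : ℕ) :
    0 ≤ᵐ[P] P[fun ω => (M (n + 1) ω - M n ω) ^ 2 | ℱ n] :=
  condExp_nonneg (ae_of_all _ fun _ => sq_nonneg _)

lemma Martingale.ae_exists_tendsto_sum_indicator_predictableQuadVar_le [IsFiniteMeasure P]
    (hM : Martingale M ℱ P) (hL2 : ∀ n, MemLp (M n) 2 P) {K : ℝ} (hK : 0 ≤ K) :
    ∀ᵐ ω ∂P, ∃ L, Tendsto (fun n => ∑ k ∈ range n,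
      {ω | predictableQuadVar M ℱ P (k + 1) ω ≤ K}.indicator (M (k + 1) - M k) ω)
      atTop (𝓝 L) := by
  set s : ℕ → Set Ω := fun k => {ω | predictableQuadVar M ℱ P (k + 1) ω ≤ K}
  set h : ℕ → Ω → ℝ := fun k => P[fun ω => (M (k + 1) ω - M k ω) ^ 2 | ℱ k]
  set D : ℕ → Ω → ℝ := fun k => (s k).indicator (M (k + 1) - M k)
  have hs : ∀ k, MeasurableSet[ℱ k] (s k) := fun k =>
    measurableSet_le (stronglyMeasurable_predictableQuadVar_succ k).measurable measurable_const
  have hmeas : ∀ k, StronglyMeasurable[ℱ (k + 1)] (D k) := fun k =>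
    ((hM.stronglyMeasurable (k + 1)).sub
      ((hM.stronglyMeasurable k).mono (ℱ.mono k.le_succ))).indicator (ℱ.mono k.le_succ _ (hs k))
  have hL2D : ∀ k, MemLp (D k) 2 P := fun k =>
    ((hL2 (k + 1)).sub (hL2 k)).indicator (ℱ.le k _ (hs k))
  have hD0 : ∀ k, P[D k | ℱ k] =ᵐ[P] 0 := fun k => by
    filter_upwards [condExp_indicator ((hM.integrable (k + 1)).sub (hM.integrable k)) (hs k),
      hM.condExp_sub_succ_ae_eq_zero k] with ω h_ind h_zero
    simp [D, h_ind, Set.indicator_apply, h_zero]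
  have hsq : ∀ k, ∫ ω, D k ω ^ 2 ∂P = ∫ ω, (s k).indicator (h k) ω ∂P := fun k => by
    calc ∫ ω, D k ω ^ 2 ∂P = ∫ ω, (s k).indicator (fun ω => (M (k + 1) ω - M k ω) ^ 2) ω ∂P := by
          congr 1; funext ω; simp only [D, Set.indicator_apply]; split_ifs <;> simp
      _ = ∫ ω, (s k).indicator (h k) ω ∂P := by
          rw [integral_indicator (ℱ.le k _ (hs k)), integral_indicator (ℱ.le k _ (hs k))]
          exact (setIntegral_condExp (ℱ.le k) ((hL2 (k + 1)).sub (hL2 k)).integrable_sq (hs k)).symm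
  -- `⟨M⟩` is predictable, so the stopped increments keep conditional mean zero and
  -- `∑ E[D k ^ 2] = E[∑ 1_{s k} h k] ≤ K P(Ω)`
  refine ae_exists_tendsto_sum_range_of_condExp_ae_eq_zero hmeas hL2D hD0
    (B := K * P.real Set.univ) fun n => ?_
  have hpointwise : ∀ᵐ ω ∂P, ∑ k ∈ range n, (s k).indicator (h k) ω ≤ K := by
    filter_upwards [ae_all_iff.2 fun k => condExp_sq_sub_nonneg (M := M) (ℱ := ℱ) (P := P) k]
      with ω hω
    simpa [s, Set.indicator_apply, predictableQuadVar, Finset.sum_apply] using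
      sum_range_ite_sum_le (a := fun k => h k ω) hω hK n
  have hint : ∀ k, Integrable ((s k).indicator (h k)) P := fun k =>
    integrable_condExp.indicator (ℱ.le k _ (hs k))
  rw [sum_congr rfl fun k _ => hsq k, ← integral_finsetSum _ fun k _ => hint k]
  calc _ ≤ ∫ _, K ∂P := integral_mono_ae (integrable_finsetSum _ fun k _ => hint k)
          (integrable_const K) hpointwise
    _ = K * P.real Set.univ := by simp [mul_comm]

theorem Martingale.ae_exists_tendsto_of_summable_condExp_sq [IsFiniteMeasure P]
    (hM : Martingale M ℱ P) (hL2 : ∀ n, MemLp (M n) 2 P) :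
    ∀ᵐ ω ∂P, Summable (fun n => P[fun ω => (M (n + 1) ω - M n ω) ^ 2 | ℱ n] ω) →
      ∃ L, Tendsto (fun n => M n ω) atTop (𝓝 L) := by
  filter_upwards [ae_all_iff.2 fun K : ℕ =>
      hM.ae_exists_tendsto_sum_indicator_predictableQuadVar_le hL2 K.cast_nonneg,
    ae_all_iff.2 fun n => condExp_sq_sub_nonneg (M := M) (ℱ := ℱ) (P := P) n]
    with ω hconv hnonneg hsum
  obtain ⟨L, hL⟩ := hconv ⌈∑' n, P[fun ω => (M (n + 1) ω - M n ω) ^ 2 | ℱ n] ω⌉₊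
  -- at a level above `⟨M⟩_∞ ω` the truncation never acts on `ω`
  have hactive : ∀ k, predictableQuadVar M ℱ P (k + 1) ω
      ≤ ⌈∑' n, P[fun ω => (M (n + 1) ω - M n ω) ^ 2 | ℱ n] ω⌉₊ := fun k => by
    simp only [predictableQuadVar, Finset.sum_apply]
    exact (hsum.sum_le_tsum _ fun n _ => hnonneg n).trans (Nat.le_ceil _)
  refine ⟨L + M 0 ω, (hL.add_const (M 0 ω)).congr fun n => ?_⟩
  simp only [Set.indicator_apply, Set.mem_ofPred_eq, hactive, if_true, Pi.sub_apply,
    sum_range_sub (fun k => M k ω)]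
  ring

theorem Martingale.ae_exists_tendsto_sum_mul_sub [IsFiniteMeasure P] (hM : Martingale M ℱ P)
    (hL2 : ∀ n, MemLp (M n) 2 P) (c : ℕ → ℝ) :
    ∀ᵐ ω ∂P, Summable (fun n => c n ^ 2 * P[fun ω => (M (n + 1) ω - M n ω) ^ 2 | ℱ n] ω) →
      ∃ L, Tendsto (fun n => ∑ k ∈ range n, c k * (M (k + 1) ω - M k ω)) atTop (𝓝 L) := by
  set D : ℕ → Ω → ℝ := fun k => c k • (M (k + 1) - M k)
  have hmeas : ∀ k, StronglyMeasurable[ℱ (k + 1)] (D k) := fun k =>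
    ((hM.stronglyMeasurable (k + 1)).sub
      ((hM.stronglyMeasurable k).mono (ℱ.mono k.le_succ))).const_smul (c k)
  have hL2D : ∀ k, MemLp (D k) 2 P := fun k => ((hL2 (k + 1)).sub (hL2 k)).const_smul (c k)
  have hD0 : ∀ k, P[D k | ℱ k] =ᵐ[P] 0 := fun k => by
    filter_upwards [condExp_smul (c k) (M (k + 1) - M k) (ℱ k),
      hM.condExp_sub_succ_ae_eq_zero k] with ω h_smul h_zero
    simp [D, h_smul, h_zero]
  have hmart := martingale_sum_range_of_condExp_ae_eq_zero hmeas
    (fun k => (hL2D k).integrable one_le_two) hD0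
  have hvar : ∀ n, P[fun ω => ((∑ k ∈ range (n + 1), D k) ω - (∑ k ∈ range n, D k) ω) ^ 2 | ℱ n]
      =ᵐ[P] fun ω => c n ^ 2 * P[fun ω => (M (n + 1) ω - M n ω) ^ 2 | ℱ n] ω := fun n => by
    have hsq : (fun ω => ((∑ k ∈ range (n + 1), D k) ω - (∑ k ∈ range n, D k) ω) ^ 2)
        = c n ^ 2 • fun ω => (M (n + 1) ω - M n ω) ^ 2 := by
      funext ω; simp [D, sum_range_succ]; ring
    rw [hsq]
    exact condExp_smul _ _ _
  filter_upwards [hmart.ae_exists_tendsto_of_summable_condExp_sq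
      (fun n => memLp_finsetSum' _ fun k _ => hL2D k), ae_all_iff.2 hvar] with ω hconv hvar hsum
  simpa [D] using hconv (hsum.congr fun n => (hvar n).symm)

end MeasureTheory

theorem stmt_14_general {Ω : Type*} {m0 : MeasurableSpace Ω} (P : Measure Ω) [IsProbabilityMeasure P]
    (ℱ : MeasureTheory.Filtration ℕ m0)
    (p : ℝ)
    (η : ℕ → ℝ)
    (M N S : ℕ → Ω → ℝ)
    (hMmart : MeasureTheory.Martingale M ℱ P) (hNmart : MeasureTheory.Martingale N ℱ P)
    (hML2 : ∀ n, MeasureTheory.MemLp (M n) 2 P)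
    (hNL2 : ∀ n, MeasureTheory.MemLp (N n) 2 P)
    (hdecomp : ∀ n, ∀ ω, S n ω = N n ω + p * η n * M n ω)
    -- a.s. summability of the normalized conditional increment second moments
    (hsumN : ∀ᵐ ω ∂P, Summable (fun n : ℕ =>
      (1 / ((n : ℝ) ^ 2)) *
        (P[(fun ω' => (N (n + 1) ω' - N n ω') ^ 2) | ℱ n]) ω))
    (hsumM : ∀ᵐ ω ∂P, Summable (fun n : ℕ =>
      (η n / (n : ℝ)) ^ 2 *
        (P[(fun ω' => (M (n + 1) ω' - M n ω') ^ 2) | ℱ n]) ω))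
    -- (n/η_n) is eventually increasing to infinity
    (hmono : ∃ N₀ : ℕ, ∀ n ≥ N₀, (n : ℝ) / η n ≤ ((n + 1 : ℕ) : ℝ) / η (n + 1))
    (htop : Tendsto (fun n : ℕ => (n : ℝ) / η n) atTop atTop) :
    ∀ᵐ ω ∂P,
      Tendsto (fun n : ℕ => N n ω / (n : ℝ)) atTop (nhds 0) ∧
      Tendsto (fun n : ℕ => η n * M n ω / (n : ℝ)) atTop (nhds 0) ∧
      Tendsto (fun n : ℕ => S n ω / (n : ℝ)) atTop (nhds 0) := by
  filter_upwards [hNmart.ae_exists_tendsto_sum_mul_sub hNL2 fun n => (n : ℝ)⁻¹,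
    hMmart.ae_exists_tendsto_sum_mul_sub hML2 fun n => η n / n, hsumN, hsumM]
    with ω hN hM hsumNω hsumMω
  obtain ⟨LN, hLN⟩ := hN (by simpa only [one_div, inv_pow] using hsumNω)
  obtain ⟨LM, hLM⟩ := hM hsumMω
  have hNlim : Tendsto (fun n : ℕ => N n ω / n) atTop (𝓝 0) :=
    hLN.kronecker_sub (b := fun n => (n : ℝ)) (x := fun n => N n ω)
      (Eventually.of_forall fun n => Nat.cast_le.2 n.le_succ)
      tendsto_natCast_atTop_atTop
  have hMlim : Tendsto (fun n : ℕ => η n * M n ω / n) atTop (𝓝 0) := by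
    have hb_mono : ∀ᶠ n : ℕ in atTop, (n : ℝ) / η n ≤ ((n + 1 : ℕ) : ℝ) / η (n + 1) :=
      eventually_atTop.2 hmono
    refine ((hLM.congr fun n => by simp only [inv_div]).kronecker_sub (x := fun n => M n ω)
      hb_mono htop).congr fun n => ?_
    rw [div_div_eq_mul_div, mul_comm]
  refine ⟨hNlim, hMlim, ?_⟩
  have hSlim := hNlim.add (hMlim.const_mul p)
  rw [zero_add, mul_zero] at hSlim
  refine hSlim.congr fun n => ?_
  rw [hdecomp]
  ring

/-- Strong law of large numbers for the amnesic step-reinforced random walk, via the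
martingale decomposition S_n = N_n + p η_n M_n and the martingale strong law. -/
theorem stmt_14 {Ω : Type*} {m0 : MeasurableSpace Ω} (P : Measure Ω) [IsProbabilityMeasure P]
    (ℱ : MeasureTheory.Filtration ℕ m0)
    (p : ℝ) (hp : p ∈ Set.Ioo (0 : ℝ) 1)
    (μ : ℕ → ℝ) (hμ : ∀ n ≥ 1, 0 < μ n)
    (ν : ℕ → ℝ) (hν : ∀ n, ν n = ∑ k ∈ Finset.Icc 1 n, μ k)
    (X : ℕ → Ω → ℝ) (hadapted : MeasureTheory.StronglyAdapted ℱ X)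
    (hL2 : ∀ n, MeasureTheory.MemLp (X n) 2 P)
    (hbdd : ∃ C : ℝ, ∀ n, ∫ ω, (X n ω) ^ 2 ∂P ≤ C)
    (Y : ℕ → Ω → ℝ) (hY : ∀ n ω, Y n ω = ∑ k ∈ Finset.Icc 1 n, μ k * X k ω)
    (hcond : ∀ n ≥ 1, P[X (n + 1) | ℱ n] =ᵐ[P] fun ω => (p / ν n) * Y n ω)
    (η : ℕ → ℝ) (hηpos : ∀ n ≥ 2, 0 < η n)
    (M N S : ℕ → Ω → ℝ)
    (hMmart : MeasureTheory.Martingale M ℱ P) (hNmart : MeasureTheory.Martingale N ℱ P)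
    (hML2 : ∀ n, MeasureTheory.MemLp (M n) 2 P)
    (hNL2 : ∀ n, MeasureTheory.MemLp (N n) 2 P)
    (hS : ∀ n ω, S n ω = ∑ k ∈ Finset.Icc 1 n, X k ω)
    (hdecomp : ∀ n, ∀ ω, S n ω = N n ω + p * η n * M n ω)
    -- a.s. summability of the normalized conditional increment second moments
    (hsumN : ∀ᵐ ω ∂P, Summable (fun n : ℕ =>
      (1 / ((n : ℝ) ^ 2)) *
        (P[(fun ω' => (N (n + 1) ω' - N n ω') ^ 2) | ℱ n]) ω))
    (hsumM : ∀ᵐ ω ∂P, Summable (fun n : ℕ =>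
      (η n / (n : ℝ)) ^ 2 *
        (P[(fun ω' => (M (n + 1) ω' - M n ω') ^ 2) | ℱ n]) ω))
    -- (n/η_n) is eventually increasing to infinity
    (hmono : ∃ N₀ : ℕ, ∀ n ≥ N₀, (n : ℝ) / η n ≤ ((n + 1 : ℕ) : ℝ) / η (n + 1))
    (htop : Tendsto (fun n : ℕ => (n : ℝ) / η n) atTop atTop) :
    ∀ᵐ ω ∂P,
      Tendsto (fun n : ℕ => N n ω / (n : ℝ)) atTop (nhds 0) ∧
      Tendsto (fun n : ℕ => η n * M n ω / (n : ℝ)) atTop (nhds 0) ∧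
      Tendsto (fun n : ℕ => S n ω / (n : ℝ)) atTop (nhds 0) :=
  stmt_14_general P ℱ p η M N S hMmart hNmart hML2 hNL2 hdecomp hsumN hsumM hmono htop
end
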